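/- arXiv:2405.13288 — 2 statements merged into one kernel-verified Lean document; each statement's English description precedes it below -/
import Mathlib

section
/- Let K ≥ 3, Δ > 0, and b = b^{[Δ]} := (0, Δ, 2Δ, …, (K−2)Δ) ∈ ℝ^{K−1}. Let u ∈ ℝ and m ∈ {1,…,K} be such that b_{m−1} ≤ u < b_m, with the conventions b_0 := −∞ and b_K := +∞. Then: (i) if m ≥ 2 and 2·σ(b_1 − u) ≤ σ(b_2 − u), then P_cl(1; u, b) ≤ P_cl(2; u, b) ≤ … ≤ P_cl(m; u, b); (ii) if m ≤ K−1 and 2·σ(u − b_{K−1}) ≤ σ(u − b_{K−2}), then P_cl(m; u, b) ≥ P_cl(m+1; u, b) ≥ … ≥ P_cl(K; u, b). (Theorem 3 (c7), with the conditions Δ ≥ Δ₁ and Δ ≥ Δ₂ expressed by the defining inequalities of the thresholds Δ₁ and Δ₂.) -/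
open Finset

/-- The standard logistic sigmoid `σ(t) = 1/(1+e^{-t})`. -/
noncomputable def sigma (t : ℝ) : ℝ := 1 / (1 + Real.exp (-t))

/-- Cumulative probabilities of the cumulative logit (CL) model with `K` classes. -/
noncomputable def cumCL (K : ℕ) (u : ℝ) (b : ℕ → ℝ) (k : ℕ) : ℝ :=
  if k = 0 then 0 else if k < K then sigma (b k - u) else 1

/-- The cumulative logit (CL) model: `P_cl(y; u, b)` for labels `y ∈ {1, …, K}`,
with biases `b` indexed by `1, …, K-1`. -/
noncomputable def Pcl (K : ℕ) (u : ℝ) (b : ℕ → ℝ) (y : ℕ) : ℝ :=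
  cumCL K u b y - cumCL K u b (y - 1)

lemma sigma_eq (t : ℝ) : sigma t = Real.exp t / (1 + Real.exp t) := by
  unfold sigma
  rw [Real.exp_neg]
  have h : (0:ℝ) < Real.exp t := Real.exp_pos t
  rw [div_eq_div_iff (by positivity) (by positivity)]
  field_simp
  ring

lemma sigma_pos (t : ℝ) : 0 < sigma t := by
  rw [sigma_eq]; positivity

lemma sigma_lt_one (t : ℝ) : sigma t < 1 := by
  rw [sigma_eq]
  rw [div_lt_one (by positivity)]
  linarith

lemma sigma_le_half {t : ℝ} (h : t ≤ 0) : sigma t ≤ 1/2 := by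
  rw [sigma_eq]
  rw [div_le_iff₀ (by positivity)]
  have := Real.exp_le_one_iff.mpr h
  linarith

lemma half_le_sigma {t : ℝ} (h : 0 ≤ t) : 1/2 ≤ sigma t := by
  rw [sigma_eq]
  rw [le_div_iff₀ (by positivity)]
  have := Real.one_le_exp h
  linarith

lemma one_sub_sigma (t : ℝ) : sigma (-t) = 1 - sigma t := by
  rw [sigma_eq, sigma_eq, Real.exp_neg]
  have h : (0:ℝ) < Real.exp t := Real.exp_pos t
  field_simp
  ring

lemma key (x d : ℝ) (h : x + d ≤ 0) :
    sigma (x + d) - sigma x ≤ sigma (x + 2*d) - sigma (x + d) := by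
  have e2 : Real.exp (x + 2*d) = Real.exp x * Real.exp d * Real.exp d := by
    rw [two_mul, ← add_assoc, Real.exp_add, Real.exp_add]
  have e1 : Real.exp (x + d) = Real.exp x * Real.exp d := Real.exp_add x d
  have hp : (0:ℝ) < Real.exp x := Real.exp_pos x
  have hq : (0:ℝ) < Real.exp d := Real.exp_pos d
  have hpq : Real.exp x * Real.exp d ≤ 1 := by
    rw [← Real.exp_add]; exact Real.exp_le_one_iff.mpr h
  rw [sigma_eq, sigma_eq, sigma_eq, e1, e2]
  set p := Real.exp x
  set q := Real.exp d
  rw [div_sub_div _ _ (by positivity) (by positivity),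
      div_sub_div _ _ (by positivity) (by positivity),
      div_le_div_iff₀ (by positivity) (by positivity)]
  nlinarith [mul_nonneg (mul_nonneg hp.le (sq_nonneg (q - 1))) (by linarith : (0:ℝ) ≤ 1 - p*q),
    mul_pos hp hq, sq_nonneg (q-1)]

lemma key2 (x d : ℝ) (h : 0 ≤ x + d) :
    sigma (x + 2*d) - sigma (x + d) ≤ sigma (x + d) - sigma x := by
  have e2 : Real.exp (x + 2*d) = Real.exp x * Real.exp d * Real.exp d := by
    rw [two_mul, ← add_assoc, Real.exp_add, Real.exp_add]
  have e1 : Real.exp (x + d) = Real.exp x * Real.exp d := Real.exp_add x d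
  have hp : (0:ℝ) < Real.exp x := Real.exp_pos x
  have hq : (0:ℝ) < Real.exp d := Real.exp_pos d
  have hpq : 1 ≤ Real.exp x * Real.exp d := by
    rw [← Real.exp_add]; exact Real.one_le_exp h
  rw [sigma_eq, sigma_eq, sigma_eq, e1, e2]
  set p := Real.exp x
  set q := Real.exp d
  rw [div_sub_div _ _ (by positivity) (by positivity),
      div_sub_div _ _ (by positivity) (by positivity),
      div_le_div_iff₀ (by positivity) (by positivity)]
  nlinarith [mul_nonneg (mul_nonneg hp.le (sq_nonneg (q - 1))) (by linarith : (0:ℝ) ≤ p*q - 1),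
    mul_pos hp hq, sq_nonneg (q-1)]


lemma cumCL_mid (K : ℕ) (u : ℝ) (b : ℕ → ℝ) {k : ℕ} (h1 : 1 ≤ k) (h2 : k < K) :
    cumCL K u b k = sigma (b k - u) := by
  unfold cumCL; rw [if_neg (by omega), if_pos h2]

lemma cumCL_zero (K : ℕ) (u : ℝ) (b : ℕ → ℝ) : cumCL K u b 0 = 0 := by
  unfold cumCL; simp

lemma cumCL_top (K : ℕ) (u : ℝ) (b : ℕ → ℝ) {k : ℕ} (h1 : 1 ≤ k) (h2 : K ≤ k) :
    cumCL K u b k = 1 := by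
  unfold cumCL; rw [if_neg (by omega), if_neg (by omega)]

/-- Theorem 3 (c7): for the equal-interval bias vector `b_k = (k-1)Δ` with `Δ > 0` and
`b_{m-1} ≤ u < b_m` (conventions `b_0 = -∞`, `b_K = +∞`):
(i) if `m ≥ 2` and `2σ(b_1-u) ≤ σ(b_2-u)` then `P_cl(1;u,b) ≤ … ≤ P_cl(m;u,b)`;
(ii) if `m ≤ K-1` and `2σ(u-b_{K-1}) ≤ σ(u-b_{K-2})` then
`P_cl(m;u,b) ≥ … ≥ P_cl(K;u,b)`. -/
theorem stmt7 (K : ℕ) (hK : 3 ≤ K) (Δ : ℝ) (hΔ : 0 < Δ)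
    (b : ℕ → ℝ) (hb : ∀ k, b k = ((k : ℝ) - 1) * Δ)
    (u : ℝ) (m : ℕ) (hm : m ∈ Finset.Icc 1 K)
    (hlo : 2 ≤ m → b (m - 1) ≤ u) (hhi : m ≤ K - 1 → u < b m) :
    (2 ≤ m → 2 * sigma (b 1 - u) ≤ sigma (b 2 - u) →
      ∀ y ∈ Finset.Icc 1 (m - 1), Pcl K u b y ≤ Pcl K u b (y + 1)) ∧
    (m ≤ K - 1 → 2 * sigma (u - b (K - 1)) ≤ sigma (u - b (K - 2)) →
      ∀ y ∈ Finset.Icc m (K - 1), Pcl K u b (y + 1) ≤ Pcl K u b y) := by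
  rw [Finset.mem_Icc] at hm
  obtain ⟨hm1, hmK⟩ := hm
  have hbmono : ∀ j k : ℕ, j ≤ k → b j ≤ b k := by
    intro j k h
    rw [hb, hb]
    have : (j:ℝ) ≤ (k:ℝ) := Nat.cast_le.mpr h
    nlinarith
  have hstep : ∀ k : ℕ, 1 ≤ k → b k - u = (b (k-1) - u) + Δ := by
    intro k h
    rw [hb, hb]
    have : ((k-1 : ℕ) : ℝ) = (k:ℝ) - 1 := by
      rw [Nat.cast_sub h]; simp
    rw [this]; ring
  constructor
  · intro h2m hyp y hy
    rw [Finset.mem_Icc] at hy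
    obtain ⟨hy1, hy2⟩ := hy
    have hyK : y < K := by omega
    unfold Pcl
    have e0 : y + 1 - 1 = y := by omega
    rw [e0]
    rw [cumCL_mid K u b hy1 hyK]
    have hbyu : b y ≤ u := le_trans (hbmono y (m-1) (by omega)) (hlo h2m)
    by_cases hyc : y + 1 < K
    · rw [cumCL_mid K u b (by omega) hyc]
      by_cases hy1' : y = 1
      · subst hy1'
        rw [cumCL_zero]
        norm_num
        linarith [hyp]
      · rw [cumCL_mid K u b (by omega : 1 ≤ y - 1) (by omega)]
        have e1 : b y - u = (b (y-1) - u) + Δ := hstep y hy1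
        have e2 : b (y+1) - u = (b (y-1) - u) + 2*Δ := by
          have := hstep (y+1) (by omega)
          simp only [Nat.add_sub_cancel] at this
          rw [this, e1]; ring
        rw [e1, e2]
        exact key _ _ (by rw [← e1]; linarith)
    · rw [cumCL_top K u b (k := y+1) (by omega) (by omega)]
      rw [cumCL_mid K u b (k := y-1) (by omega) (by omega)]
      have h1 : sigma (b y - u) ≤ 1/2 := sigma_le_half (by linarith)
      have h2 : 0 < sigma (b (y-1) - u) := sigma_pos _
      linarith
  · intro hmK' hyp y hy
    rw [Finset.mem_Icc] at hy
    obtain ⟨hy1, hy2⟩ := hy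
    have hyK : y < K := by omega
    have hym1 : 1 ≤ y := by omega
    have hubm : u < b m := hhi hmK'
    have hbyu : u < b y := lt_of_lt_of_le hubm (hbmono m y hy1)
    unfold Pcl
    have e0 : y + 1 - 1 = y := by omega
    rw [e0]
    rw [cumCL_mid K u b hym1 hyK]
    by_cases hyc : y + 1 < K
    · rw [cumCL_mid K u b (by omega) hyc]
      by_cases hy1' : y = 1
      · subst hy1'
        rw [cumCL_zero]
        have h1 : 1/2 ≤ sigma (b 1 - u) := half_le_sigma (by linarith)
        have h2 : sigma (b 2 - u) < 1 := sigma_lt_one _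
        norm_num
        linarith
      · rw [cumCL_mid K u b (by omega : 1 ≤ y - 1) (by omega)]
        have e1 : b y - u = (b (y-1) - u) + Δ := hstep y hym1
        have e2 : b (y+1) - u = (b (y-1) - u) + 2*Δ := by
          have := hstep (y+1) (by omega)
          simp only [Nat.add_sub_cancel] at this
          rw [this, e1]; ring
        rw [e1, e2]
        exact key2 _ _ (by rw [← e1]; linarith)
    · have hyeq : y = K - 1 := by omega
      rw [cumCL_top K u b (k := y+1) (by omega) (by omega)]
      rw [cumCL_mid K u b (k := y-1) (by omega) (by omega)]
      have hy2eq : y - 1 = K - 2 := by omega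
      rw [hyeq, hy2eq] at *
      have ha : u - b (K-1) = -(b (K-1) - u) := by ring
      have hb' : u - b (K-2) = -(b (K-2) - u) := by ring
      rw [ha, hb', one_sub_sigma, one_sub_sigma] at hyp
      linarith
end

section
/- Let K ≥ 3 and b ∈ ℝ^{K−1}. Suppose there exist k, l ∈ {1,…,K−1} with k < l and b_k > b_l. Then for every u ∈ (b_l, b_k), the probability vector (P_acl(y; u, b))_{y=1}^{K} is not unimodal; indeed P_acl(k; u, b) > P_acl(k+1; u, b) and P_acl(l; u, b) < P_acl(l+1; u, b). (Theorem 6 (g4).) -/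
open Finset

/-- The adjacent categories logit (ACL) model:
`P_acl(y; u, b) = exp(-Σ_{k=1}^{y-1}(b_k - u)) / Σ_{l=1}^{K} exp(-Σ_{k=1}^{l-1}(b_k - u))`
for labels `y ∈ {1,…,K}`, with biases `b` indexed by `1,…,K-1` (empty sums are 0). -/
noncomputable def Pacl (K : ℕ) (u : ℝ) (b : ℕ → ℝ) (y : ℕ) : ℝ :=
  Real.exp (-(∑ k ∈ Finset.Icc 1 (y - 1), (b k - u))) /
    ∑ l ∈ Finset.Icc 1 K, Real.exp (-(∑ k ∈ Finset.Icc 1 (l - 1), (b k - u)))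

/-- A vector `(q_1,…,q_K)` is unimodal if for every index `m` at which `q` attains its
maximum over `{1,…,K}`, `q` is non-decreasing on `{1,…,m}` and non-increasing on
`{m,…,K}`. -/
def Unimodal (K : ℕ) (q : ℕ → ℝ) : Prop :=
  ∀ m ∈ Finset.Icc 1 K, (∀ y ∈ Finset.Icc 1 K, q y ≤ q m) →
    (∀ y ∈ Finset.Icc 1 (m - 1), q y ≤ q (y + 1)) ∧
    (∀ y ∈ Finset.Icc m (K - 1), q (y + 1) ≤ q y)

lemma Pacl_den_pos (K : ℕ) (hK : 1 ≤ K) (u : ℝ) (b : ℕ → ℝ) :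
    0 < ∑ l ∈ Finset.Icc 1 K, Real.exp (-(∑ k ∈ Finset.Icc 1 (l - 1), (b k - u))) := by
  apply Finset.sum_pos (fun i _ => Real.exp_pos _)
  exact ⟨1, by simp [hK]⟩

lemma Pacl_pos (K : ℕ) (hK : 1 ≤ K) (u : ℝ) (b : ℕ → ℝ) (y : ℕ) :
    0 < Pacl K u b y :=
  div_pos (Real.exp_pos _) (Pacl_den_pos K hK u b)

lemma Pacl_succ (K : ℕ) (u : ℝ) (b : ℕ → ℝ) (y : ℕ) (hy : 1 ≤ y) :
    Pacl K u b (y + 1) = Real.exp (-(b y - u)) * Pacl K u b y := by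
  obtain ⟨m, rfl⟩ := Nat.exists_eq_add_of_le hy
  unfold Pacl
  rw [show 1 + m + 1 - 1 = m + 1 by omega, show 1 + m - 1 = m by omega,
    Finset.sum_Icc_succ_top (by omega : 1 ≤ m + 1)]
  rw [show m + 1 = 1 + m by omega, neg_add, Real.exp_add]
  ring

lemma Pacl_succ_lt (K : ℕ) (hK : 1 ≤ K) (u : ℝ) (b : ℕ → ℝ) (y : ℕ) (hy : 1 ≤ y)
    (h : u < b y) : Pacl K u b (y + 1) < Pacl K u b y := by
  rw [Pacl_succ K u b y hy]
  have h1 : Real.exp (-(b y - u)) < 1 := by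
    rw [Real.exp_lt_one_iff]; linarith
  nlinarith [Pacl_pos K hK u b y]

lemma Pacl_lt_succ (K : ℕ) (hK : 1 ≤ K) (u : ℝ) (b : ℕ → ℝ) (y : ℕ) (hy : 1 ≤ y)
    (h : b y < u) : Pacl K u b y < Pacl K u b (y + 1) := by
  rw [Pacl_succ K u b y hy]
  have h1 : 1 < Real.exp (-(b y - u)) := by
    rw [show (1:ℝ) = Real.exp 0 by simp]; apply Real.exp_lt_exp.mpr; linarith
  nlinarith [Pacl_pos K hK u b y]

/-- Theorem 6 (g4): if `b_k > b_l` for some `k < l` in `{1,…,K-1}`, then for every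
`u ∈ (b_l, b_k)` the ACL probability vector is not unimodal; indeed
`P_acl(k;u,b) > P_acl(k+1;u,b)` and `P_acl(l;u,b) < P_acl(l+1;u,b)`. -/
theorem stmt13 (K : ℕ) (hK : 3 ≤ K) (b : ℕ → ℝ) (k l : ℕ)
    (hk : k ∈ Finset.Icc 1 (K - 1)) (hl : l ∈ Finset.Icc 1 (K - 1))
    (hkl : k < l) (hbb : b l < b k)
    (u : ℝ) (hu : u ∈ Set.Ioo (b l) (b k)) :
    ¬ Unimodal K (fun y => Pacl K u b y) ∧
    Pacl K u b (k + 1) < Pacl K u b k ∧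
    Pacl K u b l < Pacl K u b (l + 1) := by
  simp only [Finset.mem_Icc] at hk hl
  obtain ⟨hu1, hu2⟩ := hu
  have hK1 : 1 ≤ K := by omega
  have h1 : Pacl K u b (k + 1) < Pacl K u b k :=
    Pacl_succ_lt K hK1 u b k hk.1 hu2
  have h2 : Pacl K u b l < Pacl K u b (l + 1) :=
    Pacl_lt_succ K hK1 u b l hl.1 hu1
  refine ⟨?_, h1, h2⟩
  intro hU
  obtain ⟨m, hm, hmax⟩ := Finset.exists_max_image (Finset.Icc 1 K)
    (fun y => Pacl K u b y) ⟨1, by simp [hK1]⟩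
  obtain ⟨inc, dec⟩ := hU m hm (fun y hy => hmax y hy)
  simp only [Finset.mem_Icc] at hm
  by_cases hmk : m ≤ k
  · have := dec l (Finset.mem_Icc.mpr ⟨by omega, hl.2⟩)
    simp only at this
    linarith
  · have := inc k (Finset.mem_Icc.mpr ⟨hk.1, by omega⟩)
    simp only at this
    linarith
end
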